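/- Let W be an N×N matrix with nonnegative real entries, and suppose that the family of weights of simple loops is summable with c := Σ_{L ∈ 𝕊𝕃} W_L < 1. Then for all nodes i, j ∈ {1,…,N}, the family of weights (W_p)_{p ∈ ℙ_{ij}} is summable and Σ_{p ∈ ℙ_{ij}} W_p ≤ (1−c)^{-1} T⋆_{ij}. -/

import Mathlib

variable {N : ℕ}

/-- The list of nodes visited by a list of edges `(i₁,j₁)⋯(i_L,j_L)`,
namely `[i₁, j₁, j₂, …, j_L]` (which equals `[i₁, …, i_L, j_L]` for a path). -/
def edgeNodes : List (Fin N × Fin N) → List (Fin N)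
  | [] => []
  | e :: rest => e.1 :: ((e :: rest).map Prod.snd)

/-- An edge list is a path when consecutive edges are compatible: `jₗ = i_{ℓ+1}`. -/
def IsPathList (l : List (Fin N × Fin N)) : Prop :=
  l.Chain' fun e f => e.2 = f.1

/-- `l` is a path from `i` to `j`; the empty path `𝟎` is a path from `i` to `i` for every `i`. -/
def PathFromTo (l : List (Fin N × Fin N)) (i j : Fin N) : Prop :=
  IsPathList l ∧
    ((l = [] ∧ i = j) ∨ ((edgeNodes l).head? = some i ∧ (edgeNodes l).getLast? = some j))

/-- A path is non-intersecting when the visited nodes are pairwise distinct. -/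
def NonIntersecting (l : List (Fin N × Fin N)) : Prop :=
  (edgeNodes l).Nodup

/-- A loop: a nonempty path with `p(1) = p(|p|+1)`. -/
def IsLoop (l : List (Fin N × Fin N)) : Prop :=
  IsPathList l ∧ l ≠ [] ∧ (edgeNodes l).head? = (edgeNodes l).getLast?

/-- A simple loop: a loop whose only repeated visited node is the initial/terminal one. -/
def IsSimpleLoop (l : List (Fin N × Fin N)) : Prop :=
  IsLoop l ∧ (edgeNodes l).dropLast.Nodup

/-- The weight `W_p` of a path: the product of the weights of its edges (`W_𝟎 = 1`). -/
def pathWeight (W : Matrix (Fin N) (Fin N) ℝ) (l : List (Fin N × Fin N)) : ℝ :=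
  (l.map fun e => W e.1 e.2).prod

/-- The simple-path matrix `T⋆_{ij} = Σ_{p ∈ 𝕍_{ij}} W_p` (a sum over a finite set). -/
noncomputable def Tstar (W : Matrix (Fin N) (Fin N) ℝ) (i j : Fin N) : ℝ :=
  ∑' q : {l : List (Fin N × Fin N) // PathFromTo l i j ∧ NonIntersecting l}, pathWeight W q.1

/-- The sum `c = Σ_{L ∈ 𝕊𝕃} W_L` of the weights of all simple loops. -/
noncomputable def slSum (W : Matrix (Fin N) (Fin N) ℝ) : ℝ :=
  ∑' L : {l : List (Fin N × Fin N) // IsSimpleLoop l}, pathWeight W L.1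


open scoped ENNReal
set_option linter.unusedSectionVars false
set_option maxHeartbeats 1600000

namespace PWAux

variable {α : Type*} [DecidableEq α]

noncomputable def lw (w : α → α → ℝ≥0∞) (ns : List α) : ℝ≥0∞ :=
  ((ns.zip ns.tail).map fun e => w e.1 e.2).prod

@[simp] lemma lw_nil (w : α → α → ℝ≥0∞) : lw w ([] : List α) = 1 := rfl
@[simp] lemma lw_single (w : α → α → ℝ≥0∞) (v : α) : lw w [v] = 1 := rfl

lemma lw_cons_cons (w : α → α → ℝ≥0∞) (x y : α) (t : List α) :
    lw w (x :: y :: t) = w x y * lw w (y :: t) := by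
  simp [lw]

lemma lw_append_cons (w : α → α → ℝ≥0∞) (a : List α) (v : α) (b : List α) :
    lw w (a ++ v :: b) = lw w (a ++ [v]) * lw w (v :: b) := by
  induction a with
  | nil => simp
  | cons x a' ih =>
    cases a' with
    | nil => simp [lw_cons_cons, mul_assoc]
    | cons y a'' =>
      simp only [List.cons_append, lw_cons_cons] at *
      rw [ih, mul_assoc]

/-- first-duplicate decomposition -/
lemma exists_nodup_prefix {ns : List α} (h : ¬ ns.Nodup) :
    ∃ a v s, ns = a ++ v :: s ∧ a.Nodup ∧ v ∈ a := by
  induction ns with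
  | nil => simp at h
  | cons x t ih =>
    by_cases ht : t.Nodup
    · have hx : x ∈ t := by
        by_contra hx; exact h (List.nodup_cons.mpr ⟨hx, ht⟩)
      obtain ⟨m, s, rfl⟩ := List.append_of_mem hx
      obtain ⟨hm, -, hdisj⟩ := List.nodup_append'.mp ht
      refine ⟨x :: m, x, s, by simp, ?_, by simp⟩
      exact List.nodup_cons.mpr ⟨fun hxm => hdisj hxm (by simp), hm⟩
    · obtain ⟨a, v, s, rfl, ha, hv⟩ := ih ht
      by_cases hxa : x ∈ a
      · obtain ⟨a₁, a₂, rfl⟩ := List.append_of_mem hxa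
        obtain ⟨h1, -, hdisj⟩ := List.nodup_append'.mp ha
        refine ⟨x :: a₁, x, a₂ ++ v :: s, by simp, ?_, by simp⟩
        exact List.nodup_cons.mpr ⟨fun hx1 => hdisj hx1 (by simp), h1⟩
      · exact ⟨x :: a, v, s, by simp, List.nodup_cons.mpr ⟨hxa, ha⟩, by simp [hv]⟩

lemma exists_fd {ns : List α} (h : ¬ ns.Nodup) :
    ∃ d : List α × α × List α × List α,
      ns = d.1 ++ d.2.1 :: (d.2.2.1 ++ d.2.1 :: d.2.2.2) ∧ (d.1 ++ d.2.1 :: d.2.2.1).Nodup := by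
  obtain ⟨a, v, s, rfl, ha, hv⟩ := exists_nodup_prefix h
  obtain ⟨p, m, rfl⟩ := List.append_of_mem hv
  exact ⟨⟨p, v, m, s⟩, by simp, ha⟩

noncomputable def nerase : List α → List α × List (List α) := fun ns =>
  if h : ns.Nodup then (ns, []) else
    let d := Classical.choose (exists_fd h)
    let r := nerase (d.1 ++ d.2.1 :: d.2.2.2)
    (r.1, (d.2.1 :: d.2.2.1 ++ [d.2.1]) :: r.2)
termination_by ns => ns.length
decreasing_by
  have hspec := congrArg List.length (Classical.choose_spec (exists_fd h)).1
  simp [List.length_append] at hspec ⊢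
  omega

def reinsert (ns L : List α) : List α :=
  match L.head? with
  | none => ns
  | some v => ns.takeWhile (fun x => x ≠ v) ++ L.dropLast ++ ns.dropWhile (fun x => x ≠ v)

lemma takeWhile_ne (p : List α) (v : α) (s : List α) (hv : v ∉ p) :
    (p ++ v :: s).takeWhile (fun x => (x ≠ v : Bool)) = p := by
  induction p with
  | nil => simp [List.takeWhile]
  | cons x t ih =>
    simp only [List.mem_cons, not_or] at hv
    have hxv : x ≠ v := fun h => hv.1 h.symm
    have ih' := ih hv.2
    simp only [ne_eq, decide_not] at ih' ⊢
    simp [List.takeWhile_cons, hxv, ih']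

lemma dropWhile_ne (p : List α) (v : α) (s : List α) (hv : v ∉ p) :
    (p ++ v :: s).dropWhile (fun x => (x ≠ v : Bool)) = v :: s := by
  induction p with
  | nil => simp [List.dropWhile]
  | cons x t ih =>
    simp only [List.mem_cons, not_or] at hv
    have hxv : x ≠ v := fun h => hv.1 h.symm
    have ih' := ih hv.2
    simp only [ne_eq, decide_not] at ih' ⊢
    simp [List.dropWhile_cons, hxv, ih']

lemma reinsert_eq (p : List α) (v : α) (m s : List α) (hv : v ∉ p) :
    reinsert (p ++ v :: s) (v :: m ++ [v]) = p ++ v :: (m ++ v :: s) := by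
  have h1 := takeWhile_ne p v s hv
  have h2 := dropWhile_ne p v s hv
  simp only [reinsert, List.head?_cons, List.cons_append, List.dropLast_concat] at *
  rw [h1, h2, ← List.cons_append, List.dropLast_concat]
  simp



lemma nerase_of_nodup {ns : List α} (h : ns.Nodup) : nerase ns = (ns, []) := by
  rw [nerase]; simp [h]

lemma nerase_of_not {ns : List α} (h : ¬ ns.Nodup) :
    nerase ns =
      ((nerase ((Classical.choose (exists_fd h)).1 ++ (Classical.choose (exists_fd h)).2.1 ::
          (Classical.choose (exists_fd h)).2.2.2)).1,
        ((Classical.choose (exists_fd h)).2.1 :: (Classical.choose (exists_fd h)).2.2.1 ++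
          [(Classical.choose (exists_fd h)).2.1]) ::
        (nerase ((Classical.choose (exists_fd h)).1 ++ (Classical.choose (exists_fd h)).2.1 ::
          (Classical.choose (exists_fd h)).2.2.2)).2) := by
  rw [nerase]; simp [h]

def SLn (ns : List α) : Prop :=
  2 ≤ ns.length ∧ ns.head? = ns.getLast? ∧ ns.dropLast.Nodup

lemma getLast?_append_cons (p : List α) (v : α) (s : List α) :
    (p ++ v :: s).getLast? = (v :: s).getLast? := by
  rw [List.getLast?_append]
  cases h : (v :: s).getLast? with
  | none => simp at h
  | some a => simp

theorem nerase_props : ∀ (n : ℕ) (ns : List α), ns.length ≤ n →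
    (nerase ns).1.Nodup ∧
    (nerase ns).2.foldr (fun L acc => reinsert acc L) (nerase ns).1 = ns ∧
    (nerase ns).1.head? = ns.head? ∧
    (nerase ns).1.getLast? = ns.getLast? ∧
    (∀ L ∈ (nerase ns).2, SLn L) ∧
    ∀ w : α → α → ℝ≥0∞, lw w (nerase ns).1 * ((nerase ns).2.map (lw w)).prod = lw w ns := by
  intro n
  induction n with
  | zero =>
    intro ns hlen
    have : ns = [] := List.length_eq_zero_iff.mp (Nat.le_zero.mp hlen)
    subst this
    rw [nerase_of_nodup List.nodup_nil]
    simp [SLn]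
  | succ n ih =>
    intro ns hlen
    by_cases h : ns.Nodup
    · rw [nerase_of_nodup h]; simp [SLn, h]
    · have hspec := Classical.choose_spec (exists_fd h)
      rw [nerase_of_not h]
      obtain ⟨hspec1, hspec2⟩ := hspec
      set d := Classical.choose (exists_fd h) with hd
      obtain ⟨p, v, m, s⟩ := d
      simp only at hspec1 hspec2 ⊢
      have hvp : v ∉ p := by
        intro hvp
        obtain ⟨-, -, hdisj⟩ := List.nodup_append'.mp hspec2
        exact hdisj hvp (by simp)
      have hlen' : (p ++ v :: s).length ≤ n := by
        have := congrArg List.length hspec1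
        simp [List.length_append] at this ⊢
        omega
      obtain ⟨h1, h2, h3, h4, h5, h6⟩ := ih (p ++ v :: s) hlen'
      refine ⟨h1, ?_, ?_, ?_, ?_, ?_⟩
      · -- foldr reconstruction
        simp only [List.foldr_cons, h2]
        rw [hspec1, ← reinsert_eq p v m s hvp]
      · rw [h3, hspec1]
        simp [List.head?_append]
      · rw [h4, hspec1, getLast?_append_cons, getLast?_append_cons]
        rw [show (v :: (m ++ v :: s)) = (v :: m) ++ v :: s by simp, getLast?_append_cons]
      · intro L hL
        rcases List.mem_cons.mp hL with rfl | hL'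
        · refine ⟨by simp, ?_, ?_⟩
          · rw [show (v :: m ++ [v] : List α) = (v :: m) ++ [v] by simp,
              List.getLast?_concat]
            simp
          · rw [show (v :: m ++ [v] : List α) = (v :: m) ++ [v] by simp,
              List.dropLast_concat]
            exact hspec2.of_append_right
        · exact h5 L hL'
      · intro w
        have key : lw w ns = lw w (p ++ v :: s) * lw w (v :: m ++ [v]) := by
          rw [hspec1, lw_append_cons w p v (m ++ v :: s), lw_append_cons w p v s]
          rw [show (v :: (m ++ v :: s)) = (v :: m) ++ v :: s by simp,
            lw_append_cons w (v :: m) v s]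
          rw [show (v :: m ++ [v] : List α) = (v :: m) ++ [v] by simp]
          ring
        rw [key, ← h6 w]
        simp only [List.map_cons, List.prod_cons]
        ring

theorem nerase_reconstruct (ns : List α) :
    (nerase ns).2.foldr (fun L acc => reinsert acc L) (nerase ns).1 = ns :=
  (nerase_props ns.length ns le_rfl).2.1

theorem nerase_injective : Function.Injective (nerase (α := α)) := by
  intro a b hab
  rw [← nerase_reconstruct a, ← nerase_reconstruct b, hab]





section general
variable {α : Type*} [DecidableEq α]

lemma chain'_zip_tail : ∀ (ns : List α), ((ns.zip ns.tail).Chain' fun e f => e.2 = f.1)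
  | [] => by simp [List.Chain']
  | [a] => by simp [List.Chain']
  | (a :: b :: t) => by
    have ih := chain'_zip_tail (b :: t)
    show ((a, b) :: ((b :: t).zip t)).Chain' fun e f => e.2 = f.1
    refine List.isChain_cons.mpr ⟨?_, ih⟩
    intro y hy
    cases t with
    | nil => simp at hy
    | cons c t' =>
      simp only [List.zip_cons_cons, List.head?_cons, Option.mem_def, Option.some.injEq] at hy
      rw [← hy]

end general

lemma edgeNodes_eq_nil_iff {l : List (Fin N × Fin N)} : edgeNodes l = [] ↔ l = [] := by
  cases l <;> simp [edgeNodes]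

lemma edgeNodes_length {l : List (Fin N × Fin N)} (h : l ≠ []) :
    (edgeNodes l).length = l.length + 1 := by
  cases l with
  | nil => exact absurd rfl h
  | cons e rest => simp [edgeNodes]

lemma zip_edgeNodes : ∀ {l : List (Fin N × Fin N)}, IsPathList l →
    ((edgeNodes l).zip (edgeNodes l).tail) = l
  | [], _ => rfl
  | [e], _ => by simp [edgeNodes]
  | (e :: f :: rest), h => by
    have h1 : e.2 = f.1 := (List.isChain_cons_cons.mp h).1
    have ih := zip_edgeNodes (l := f :: rest) (List.isChain_cons_cons.mp h).2
    have hX : edgeNodes (e :: f :: rest) = e.1 :: edgeNodes (f :: rest) := by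
      simp [edgeNodes, h1]
    have hX2 : edgeNodes (f :: rest) = f.1 :: (f :: rest).map Prod.snd := rfl
    rw [hX, hX2]
    show (e.1, f.1) :: (List.zip (f.1 :: (f :: rest).map Prod.snd) ((f :: rest).map Prod.snd))
        = e :: f :: rest
    rw [← hX2]
    show (e.1, f.1) :: ((edgeNodes (f :: rest)).zip (edgeNodes (f :: rest)).tail) = _
    rw [ih, ← h1]

lemma edgeNodes_zip : ∀ {ns : List (Fin N)}, 2 ≤ ns.length →
    edgeNodes (ns.zip ns.tail) = ns
  | a :: b :: t, _ => by
    show edgeNodes ((a, b) :: (b :: t).zip t) = a :: b :: t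
    simp only [edgeNodes, List.map_cons]
    rw [List.map_snd_zip (by simp)]



lemma tsum_fin_pi {S : Type*} (f : S → ℝ≥0∞) :
    ∀ n : ℕ, ∑' t : Fin n → S, ∏ i, f (t i) = (∑' x, f x) ^ n := by
  intro n
  induction n with
  | zero =>
    rw [tsum_eq_single (fun i => i.elim0) (by intro b hb; exact absurd (funext fun i => i.elim0) hb)]
    simp
  | succ n ih =>
    let e := Fin.consEquiv (fun _ : Fin (n + 1) => S)
    rw [← Equiv.tsum_eq e (fun t => ∏ i, f (t i))]
    have : ∀ p : S × (Fin n → S), (∏ i, f (e p i)) = f p.1 * ∏ i, f (p.2 i) := by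
      intro p
      obtain ⟨x, t⟩ := p
      have he : e (x, t) = Fin.cons x t := rfl
      rw [Fin.prod_univ_succ, he, Fin.cons_zero]
      simp [Fin.cons_succ]
    calc ∑' p : S × (Fin n → S), ∏ i, f (e p i)
        = ∑' p : S × (Fin n → S), f p.1 * ∏ i, f (p.2 i) := tsum_congr this
      _ = ∑' x : S, ∑' t : Fin n → S, f x * ∏ i, f (t i) := ENNReal.tsum_prod'
      _ = ∑' x : S, f x * ((∑' x, f x) ^ n) := by
          refine tsum_congr fun x => ?_
          rw [ENNReal.tsum_mul_left, ih]
      _ = (∑' x, f x) ^ (n + 1) := by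
          rw [ENNReal.tsum_mul_right, pow_succ, mul_comm]

lemma list_map_prod_get {S : Type*} (f : S → ℝ≥0∞) (ls : List S) :
    (ls.map f).prod = ∏ i : Fin ls.length, f (ls.get i) := by
  conv_lhs => rw [← List.ofFn_get ls]
  rw [List.map_ofFn, List.prod_ofFn]
  simp

lemma tsum_list_prod_le {S : Type*} (f : S → ℝ≥0∞) :
    ∑' ls : List S, (ls.map f).prod ≤ (1 - ∑' x, f x)⁻¹ := by
  have hinj : Function.Injective (fun ls : List S => (⟨ls.length, ls.get⟩ : Σ n, Fin n → S)) := by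
    intro a b hab
    obtain ⟨h1, h2⟩ := Sigma.mk.inj_iff.mp hab
    refine List.ext_get h1 fun i hi hi' => ?_
    have h3 := (Fin.heq_fun_iff h1).mp h2
    exact h3 ⟨i, hi⟩
  calc ∑' ls : List S, (ls.map f).prod
      = ∑' ls : List S, (fun σ : Σ n, Fin n → S => ∏ i, f (σ.2 i)) ⟨ls.length, ls.get⟩ := by
        exact tsum_congr fun ls => list_map_prod_get f ls
    _ ≤ ∑' σ : Σ n, Fin n → S, ∏ i, f (σ.2 i) := ENNReal.tsum_comp_le_tsum_of_injective hinj _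
    _ = ∑' n : ℕ, ∑' t : Fin n → S, ∏ i, f (t i) := ENNReal.tsum_sigma' _
    _ = ∑' n : ℕ, (∑' x, f x) ^ n := tsum_congr (tsum_fin_pi f)
    _ = (1 - ∑' x, f x)⁻¹ := ENNReal.tsum_geometric _


section finpart
variable {N : ℕ}

noncomputable def ew (W : Matrix (Fin N) (Fin N) ℝ) : Fin N → Fin N → ℝ≥0∞ :=
  fun a b => ENNReal.ofReal (W a b)

noncomputable def gw (W : Matrix (Fin N) (Fin N) ℝ) (l : List (Fin N × Fin N)) : ℝ≥0∞ :=
  (l.map fun e => ENNReal.ofReal (W e.1 e.2)).prod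

lemma pathWeight_nonneg {W : Matrix (Fin N) (Fin N) ℝ} (hW : ∀ i j, 0 ≤ W i j)
    (l : List (Fin N × Fin N)) : 0 ≤ pathWeight W l := by
  induction l with
  | nil => norm_num [pathWeight]
  | cons e t ih =>
    have : pathWeight W (e :: t) = W e.1 e.2 * pathWeight W t := by simp [pathWeight]
    rw [this]
    exact mul_nonneg (hW _ _) ih

lemma gw_eq {W : Matrix (Fin N) (Fin N) ℝ} (hW : ∀ i j, 0 ≤ W i j)
    (l : List (Fin N × Fin N)) : gw W l = ENNReal.ofReal (pathWeight W l) := by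
  induction l with
  | nil => simp [gw, pathWeight]
  | cons e t ih =>
    have h1 : pathWeight W (e :: t) = W e.1 e.2 * pathWeight W t := by simp [pathWeight]
    have h2 : gw W (e :: t) = ENNReal.ofReal (W e.1 e.2) * gw W t := by simp [gw]
    rw [h1, h2, ih, ENNReal.ofReal_mul (hW _ _)]

lemma lw_zip_eq_gw (W : Matrix (Fin N) (Fin N) ℝ) (ns : List (Fin N)) :
    lw (ew W) ns = gw W (ns.zip ns.tail) := rfl

lemma lw_edgeNodes {W : Matrix (Fin N) (Fin N) ℝ} {l : List (Fin N × Fin N)}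
    (hp : IsPathList l) : lw (ew W) (edgeNodes l) = gw W l := by
  rw [lw_zip_eq_gw, zip_edgeNodes hp]

/-- node-list path predicate -/
def PN (i j : Fin N) (ns : List (Fin N)) : Prop :=
  ns ≠ [] ∧ ns.head? = some i ∧ ns.getLast? = some j

def toNodesP (i : Fin N) (l : List (Fin N × Fin N)) : List (Fin N) :=
  if l = [] then [i] else edgeNodes l

lemma PN_toNodesP {i j : Fin N} {l : List (Fin N × Fin N)} (h : PathFromTo l i j) :
    PN i j (toNodesP i l) := by
  by_cases hl : l = []
  · subst hl
    have hij : i = j := by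
      rcases h.2 with ⟨-, hij⟩ | ⟨hh, -⟩
      · exact hij
      · simp [edgeNodes] at hh
    simp [toNodesP, PN, hij]
  · rcases h.2 with ⟨hnil, -⟩ | ⟨hh, hl'⟩
    · exact absurd hnil hl
    · exact ⟨by simp [toNodesP, hl, edgeNodes_eq_nil_iff, hl], by simpa [toNodesP, hl] using hh,
        by simpa [toNodesP, hl] using hl'⟩

lemma nodup_toNodesP {i j : Fin N} {l : List (Fin N × Fin N)} (h : PathFromTo l i j)
    (hni : NonIntersecting l) : (toNodesP i l).Nodup := by
  by_cases hl : l = []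
  · simp [toNodesP, hl]
  · simpa [toNodesP, hl, NonIntersecting] using hni

lemma fromNodes_toNodesP {i j : Fin N} {l : List (Fin N × Fin N)} (h : PathFromTo l i j) :
    (toNodesP i l).zip (toNodesP i l).tail = l := by
  by_cases hl : l = []
  · simp [toNodesP, hl]
  · simp only [toNodesP, hl, if_false]
    exact zip_edgeNodes h.1

lemma toNodesP_inj {i j : Fin N} {l₁ l₂ : List (Fin N × Fin N)} (h₁ : PathFromTo l₁ i j)
    (h₂ : PathFromTo l₂ i j) (heq : toNodesP i l₁ = toNodesP i l₂) : l₁ = l₂ := by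
  rw [← fromNodes_toNodesP h₁, ← fromNodes_toNodesP h₂, heq]

lemma lw_toNodesP {W : Matrix (Fin N) (Fin N) ℝ} {i j : Fin N} {l : List (Fin N × Fin N)}
    (h : PathFromTo l i j) : lw (ew W) (toNodesP i l) = gw W l := by
  by_cases hl : l = []
  · simp [toNodesP, hl, gw]
  · simp only [toNodesP, hl, if_false]
    exact lw_edgeNodes h.1

lemma pathFromTo_fromNodes {i j : Fin N} {ns : List (Fin N)} (hpn : PN i j ns) :
    PathFromTo (ns.zip ns.tail) i j := by
  refine ⟨chain'_zip_tail ns, ?_⟩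
  match ns, hpn with
  | [v], hpn =>
    left
    have hi : v = i := by simpa using hpn.2.1
    have hj : v = j := by simpa using hpn.2.2
    exact ⟨by simp, by rw [← hi, ← hj]⟩
  | a :: b :: t, hpn =>
    right
    rw [edgeNodes_zip (by simp)]
    exact hpn.2

lemma toNodesP_fromNodes {i j : Fin N} {ns : List (Fin N)} (hpn : PN i j ns) :
    toNodesP i (ns.zip ns.tail) = ns := by
  match ns, hpn with
  | [v], hpn =>
    have hi : v = i := by simpa using hpn.2.1
    show toNodesP i [] = [v]
    simp [toNodesP, hi]
  | a :: b :: t, hpn =>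
    have hz : (a, b) :: ((b :: t).zip t) ≠ [] := by simp
    show toNodesP i ((a, b) :: ((b :: t).zip t)) = a :: b :: t
    rw [show toNodesP i ((a, b) :: ((b :: t).zip t)) = edgeNodes ((a, b) :: ((b :: t).zip t))
      from if_neg hz]
    exact edgeNodes_zip (ns := a :: b :: t) (by simp [List.length_cons])

lemma nonInter_fromNodes {i j : Fin N} {ns : List (Fin N)} (hpn : PN i j ns)
    (hnd : ns.Nodup) : NonIntersecting (ns.zip ns.tail) := by
  match ns, hpn with
  | [v], _ =>
    show (edgeNodes (([v] : List (Fin N)).zip ([v] : List (Fin N)).tail)).Nodup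
    exact List.nodup_nil
  | a :: b :: t, hpn =>
    show (edgeNodes ((a :: b :: t).zip (a :: b :: t).tail)).Nodup
    rw [edgeNodes_zip (by simp)]
    exact hnd

/-- Equiv between non-intersecting edge paths and nodup node paths. -/
noncomputable def eV (i j : Fin N) :
    {l : List (Fin N × Fin N) // PathFromTo l i j ∧ NonIntersecting l} ≃
    {ns : List (Fin N) // PN i j ns ∧ ns.Nodup} where
  toFun x := ⟨toNodesP i x.1, PN_toNodesP x.2.1, nodup_toNodesP x.2.1 x.2.2⟩
  invFun x := ⟨x.1.zip x.1.tail, pathFromTo_fromNodes x.2.1, nonInter_fromNodes x.2.1 x.2.2⟩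
  left_inv x := Subtype.ext (fromNodes_toNodesP x.2.1)
  right_inv x := Subtype.ext (toNodesP_fromNodes x.2.1)

/-- Equiv between simple loops (edge lists) and simple node loops. -/
noncomputable def eSL :
    {l : List (Fin N × Fin N) // IsSimpleLoop l} ≃ {ns : List (Fin N) // SLn ns} where
  toFun x := ⟨edgeNodes x.1, by
    obtain ⟨⟨hp, hne, hh⟩, hnd⟩ := x.2
    refine ⟨?_, hh, hnd⟩
    rw [edgeNodes_length hne]
    have := List.length_pos_iff.mpr hne
    omega⟩
  invFun x := ⟨x.1.zip x.1.tail, by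
    obtain ⟨hlen, hh, hnd⟩ := x.2
    have hzlen : 0 < (x.1.zip x.1.tail).length := by
      rw [List.length_zip, List.length_tail]
      omega
    have hzne := List.length_pos_iff.mp hzlen
    refine ⟨⟨chain'_zip_tail x.1, hzne, ?_⟩, ?_⟩
    · rw [edgeNodes_zip hlen]; exact hh
    · rw [edgeNodes_zip hlen]; exact hnd⟩
  left_inv x := Subtype.ext (zip_edgeNodes x.2.1.1)
  right_inv x := Subtype.ext (edgeNodes_zip x.2.1)

/-- loop erasure map on node paths -/
noncomputable def Phi (i j : Fin N) (x : {ns : List (Fin N) // PN i j ns}) :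
    {q : List (Fin N) // PN i j q ∧ q.Nodup} × List {L : List (Fin N) // SLn L} :=
  (⟨(nerase x.1).1, by
      obtain ⟨h1, -, h3, h4, -, -⟩ := nerase_props x.1.length x.1 le_rfl
      refine ⟨⟨?_, ?_, ?_⟩, h1⟩
      · intro hq
        rw [hq] at h3
        rw [x.2.2.1] at h3
        simp at h3
      · rw [h3]; exact x.2.2.1
      · rw [h4]; exact x.2.2.2⟩,
    (nerase x.1).2.attach.map fun L =>
      ⟨L.1, (nerase_props x.1.length x.1 le_rfl).2.2.2.2.1 L.1 L.2⟩)

lemma Phi_injective (i j : Fin N) : Function.Injective (Phi i j) := by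
  intro a b hab
  have h1 : (nerase a.1).1 = (nerase b.1).1 :=
    congrArg Subtype.val (congrArg Prod.fst hab)
  have h2 : (nerase a.1).2 = (nerase b.1).2 := by
    have h := congrArg (fun z => z.2.map Subtype.val) hab
    simp only [Phi, List.map_map, Function.comp_def] at h
    simpa using h
  have : nerase a.1 = nerase b.1 := Prod.ext h1 h2
  exact Subtype.ext (nerase_injective this)

lemma Phi_weight (W : Matrix (Fin N) (Fin N) ℝ) (i j : Fin N)
    (x : {ns : List (Fin N) // PN i j ns}) :
    lw (ew W) (Phi i j x).1.1 *
      (((Phi i j x).2).map fun L => lw (ew W) L.1).prod = lw (ew W) x.1 := by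
  have h6 := (nerase_props x.1.length x.1 le_rfl).2.2.2.2.2 (ew W)
  have hmap : (((Phi i j x).2).map fun L => lw (ew W) L.1) =
      (nerase x.1).2.map (lw (ew W)) := by
    simp only [Phi, List.map_map, Function.comp_def]
    rw [List.attach_map_val]
  rw [hmap]
  exact h6

lemma finite_nodup : Finite {ls : List (Fin N) // ls.Nodup} := by
  have h : {ls : List (Fin N) | ls.Nodup}.Finite :=
    (List.finite_length_le (Fin N) N).subset fun ls hls => by
      simpa using List.Nodup.length_le_card hls |>.trans (by simp)
  exact h.to_subtype

lemma finite_V (i j : Fin N) :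
    Finite {l : List (Fin N × Fin N) // PathFromTo l i j ∧ NonIntersecting l} := by
  have h1 := finite_nodup (N := N)
  have h2 : Finite {ns : List (Fin N) // PN i j ns ∧ ns.Nodup} :=
    Finite.of_injective (fun x => (⟨x.1, x.2.2⟩ : {ls : List (Fin N) // ls.Nodup}))
      (fun a b h => Subtype.ext
        (congrArg (fun z : {ls : List (Fin N) // ls.Nodup} => z.val) h))
  exact Finite.of_equiv _ (eV i j).symm

end finpart

end PWAux

open PWAux in
/-- If the total weight of simple loops is `c < 1`, then for all nodes `i, j` the family of
weights of paths from `i` to `j` is summable with `Σ_{p ∈ ℙ_{ij}} W_p ≤ (1-c)⁻¹ T⋆_{ij}`. -/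
theorem path_weight_sum_bounded_by_simple_path_matrix
    (N : ℕ) (hN : 1 ≤ N) (W : Matrix (Fin N) (Fin N) ℝ) (hW : ∀ i j, 0 ≤ W i j)
    (hsum : Summable fun L : {l : List (Fin N × Fin N) // IsSimpleLoop l} => pathWeight W L.1)
    (hc : slSum W < 1) :
    ∀ i j : Fin N,
      Summable (fun q : {l : List (Fin N × Fin N) // PathFromTo l i j} => pathWeight W q.1) ∧
      (∑' q : {l : List (Fin N × Fin N) // PathFromTo l i j}, pathWeight W q.1) ≤
        (1 - slSum W)⁻¹ * Tstar W i j := by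
  intro i j
  classical
  have hcW0 : 0 ≤ slSum W := tsum_nonneg fun L => pathWeight_nonneg hW L.1
  have hT0 : 0 ≤ Tstar W i j := tsum_nonneg fun q => pathWeight_nonneg hW q.1
  -- simple-loop sum in ℝ≥0∞
  have hc' : (∑' L : {ns : List (Fin N) // SLn ns}, lw (ew W) L.1)
      = ENNReal.ofReal (slSum W) := by
    rw [← Equiv.tsum_eq (eSL (N := N)) (fun L : {ns : List (Fin N) // SLn ns} => lw (ew W) L.1)]
    have h1 : ∀ l : {l : List (Fin N × Fin N) // IsSimpleLoop l},
        lw (ew W) ((eSL (N := N)) l).1 = ENNReal.ofReal (pathWeight W l.1) := by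
      intro l
      show lw (ew W) (edgeNodes l.1) = _
      rw [lw_edgeNodes l.2.1.1, gw_eq hW]
    rw [tsum_congr h1,
      ← ENNReal.ofReal_tsum_of_nonneg (fun L : {l : List (Fin N × Fin N) // IsSimpleLoop l} => pathWeight_nonneg hW L.1) hsum]
    rfl
  -- Tstar in ℝ≥0∞
  have hfinV : Finite {l : List (Fin N × Fin N) // PathFromTo l i j ∧ NonIntersecting l} :=
    finite_V i j
  have hsumV : Summable
      (fun q : {l : List (Fin N × Fin N) // PathFromTo l i j ∧ NonIntersecting l} =>
        pathWeight W q.1) := .of_finite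
  have hT' : (∑' q : {ns : List (Fin N) // PN i j ns ∧ ns.Nodup}, lw (ew W) q.1)
      = ENNReal.ofReal (Tstar W i j) := by
    rw [← Equiv.tsum_eq (eV i j)
      (fun q : {ns : List (Fin N) // PN i j ns ∧ ns.Nodup} => lw (ew W) q.1)]
    have h1 : ∀ l : {l : List (Fin N × Fin N) // PathFromTo l i j ∧ NonIntersecting l},
        lw (ew W) ((eV i j) l).1 = ENNReal.ofReal (pathWeight W l.1) := by
      intro l
      show lw (ew W) (toNodesP i l.1) = _
      rw [lw_toNodesP l.2.1, gw_eq hW]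
    rw [tsum_congr h1,
      ← ENNReal.ofReal_tsum_of_nonneg (fun q : {l : List (Fin N × Fin N) // PathFromTo l i j ∧ NonIntersecting l} => pathWeight_nonneg hW q.1) hsumV]
    rfl
  -- injection of paths into node paths
  have θinj : Function.Injective
      (fun x : {l : List (Fin N × Fin N) // PathFromTo l i j} =>
        (⟨toNodesP i x.1, PN_toNodesP x.2⟩ : {ns : List (Fin N) // PN i j ns})) := by
    intro a b h
    exact Subtype.ext (toNodesP_inj a.2 b.2
      (congrArg (fun z : {ns : List (Fin N) // PN i j ns} => z.val) h))
  -- main chain in ℝ≥0∞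
  have key : (∑' q : {l : List (Fin N × Fin N) // PathFromTo l i j},
        ENNReal.ofReal (pathWeight W q.1)) ≤
      (1 - ENNReal.ofReal (slSum W))⁻¹ * ENNReal.ofReal (Tstar W i j) := by
    calc ∑' q : {l : List (Fin N × Fin N) // PathFromTo l i j},
          ENNReal.ofReal (pathWeight W q.1)
        = ∑' q : {l : List (Fin N × Fin N) // PathFromTo l i j},
            lw (ew W) (toNodesP i q.1) := by
          refine tsum_congr fun q => ?_
          rw [lw_toNodesP q.2, gw_eq hW]
      _ ≤ ∑' ns : {ns : List (Fin N) // PN i j ns}, lw (ew W) ns.1 :=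
          ENNReal.tsum_comp_le_tsum_of_injective θinj (fun ns => lw (ew W) ns.1)
      _ = ∑' ns : {ns : List (Fin N) // PN i j ns},
            (fun x : {q : List (Fin N) // PN i j q ∧ q.Nodup} ×
                List {L : List (Fin N) // SLn L} =>
              lw (ew W) x.1.1 * (x.2.map fun L => lw (ew W) L.1).prod) (Phi i j ns) :=
          tsum_congr fun ns => (Phi_weight W i j ns).symm
      _ ≤ ∑' x : {q : List (Fin N) // PN i j q ∧ q.Nodup} × List {L : List (Fin N) // SLn L},
            lw (ew W) x.1.1 * (x.2.map fun L => lw (ew W) L.1).prod :=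
          ENNReal.tsum_comp_le_tsum_of_injective (Phi_injective i j) _
      _ = (∑' q : {q : List (Fin N) // PN i j q ∧ q.Nodup}, lw (ew W) q.1) *
            ∑' ls : List {L : List (Fin N) // SLn L},
              (ls.map fun L => lw (ew W) L.1).prod := by
          rw [ENNReal.tsum_prod']
          simp_rw [ENNReal.tsum_mul_left]
          rw [ENNReal.tsum_mul_right]
      _ ≤ ENNReal.ofReal (Tstar W i j) * (1 - ENNReal.ofReal (slSum W))⁻¹ := by
          rw [hT']
          exact mul_le_mul_right
            (le_trans (tsum_list_prod_le _) (le_of_eq (by rw [hc']))) _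
      _ = (1 - ENNReal.ofReal (slSum W))⁻¹ * ENNReal.ofReal (Tstar W i j) := mul_comm _ _
  have h1c : (0 : ℝ≥0∞) < 1 - ENNReal.ofReal (slSum W) :=
    tsub_pos_of_lt (ENNReal.ofReal_lt_one.mpr hc)
  have hRne : (1 - ENNReal.ofReal (slSum W))⁻¹ * ENNReal.ofReal (Tstar W i j) ≠ ⊤ :=
    ENNReal.mul_ne_top (ENNReal.inv_ne_top.mpr (ne_of_gt h1c)) ENNReal.ofReal_ne_top
  have hAne : (∑' q : {l : List (Fin N × Fin N) // PathFromTo l i j},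
      ENNReal.ofReal (pathWeight W q.1)) ≠ ⊤ := ne_top_of_le_ne_top hRne key
  have hsummable : Summable
      (fun q : {l : List (Fin N × Fin N) // PathFromTo l i j} => pathWeight W q.1) := by
    have h := ENNReal.summable_toReal hAne
    exact h.congr fun q => ENNReal.toReal_ofReal (pathWeight_nonneg hW q.1)
  refine ⟨hsummable, ?_⟩
  have htsum : (∑' q : {l : List (Fin N × Fin N) // PathFromTo l i j}, pathWeight W q.1) =
      (∑' q : {l : List (Fin N × Fin N) // PathFromTo l i j},
        ENNReal.ofReal (pathWeight W q.1)).toReal := by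
    rw [ENNReal.tsum_toReal_eq fun a => ENNReal.ofReal_ne_top]
    exact tsum_congr fun q => (ENNReal.toReal_ofReal (pathWeight_nonneg hW q.1)).symm
  rw [htsum]
  refine le_trans (ENNReal.toReal_mono hRne key) (le_of_eq ?_)
  rw [ENNReal.toReal_mul, ENNReal.toReal_ofReal hT0]
  congr 1
  have hsub : (1 : ℝ≥0∞) - ENNReal.ofReal (slSum W) = ENNReal.ofReal (1 - slSum W) := by
    rw [ENNReal.ofReal_sub _ hcW0, ENNReal.ofReal_one]
  rw [hsub, ← ENNReal.ofReal_inv_of_pos (by linarith),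
    ENNReal.toReal_ofReal (inv_nonneg.mpr (by linarith))]
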